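/- Fix μ ∈ ℝ, σ > 0, c ∈ ℝ, τ > 0 and q ∈ ℝ, and suppose μ > c. Then the map t ↦ F(t, τ, q; μ, σ, c) is strictly decreasing on (0, ∞): if 0 < t < t' then F(t, τ, q; μ, σ, c) > F(t', τ, q; μ, σ, c). -/

import Mathlib

open Real MeasureTheory Filter Topology

/-- Standard normal density φ(x) = exp(-x²/2)/√(2π). -/
noncomputable def stdPdf (x : ℝ) : ℝ := Real.exp (-(x ^ 2) / 2) / Real.sqrt (2 * Real.pi)

/-- Standard normal CDF Φ(x) = ∫_{-∞}^x φ(u) du. -/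
noncomputable def stdCdf (x : ℝ) : ℝ := ∫ u in Set.Iio x, stdPdf u

/-- Survival probability F(t, τ, q; μ, σ, c): the probability that the agent's
reputation does not hit the cost c before time t, given true quality q. -/
noncomputable def survF (t τ q μ σ c : ℝ) : ℝ :=
  stdCdf (Real.sqrt (t * τ) * (q - c) + (μ - c) / (σ ^ 2 * Real.sqrt (t * τ)))
    - Real.exp (-(2 / σ ^ 2) * (μ - c) * (q - c)) *
      stdCdf (Real.sqrt (t * τ) * (q - c) - (μ - c) / (σ ^ 2 * Real.sqrt (t * τ)))

/-! Writing `s = √(tτ)`, `a = q - c` and `b = (μ - c)/σ²`, the survival probability is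
`Φ(s a + b/s) - e^{-2ab} Φ(s a - b/s)`. The Gaussian identity
`e^{-2ab} φ(s a - b/s) = φ(s a + b/s)` makes the two `a`-terms of its `s`-derivative cancel,
leaving `-(2b/s²) φ(s a + b/s) < 0` when `b > 0`. -/

lemma continuous_stdPdf : Continuous stdPdf := by
  unfold stdPdf; fun_prop

lemma stdPdf_pos (x : ℝ) : 0 < stdPdf x :=
  div_pos (exp_pos _) (sqrt_pos.2 (by positivity))

lemma integrable_stdPdf : Integrable stdPdf := by
  have h : stdPdf = fun x => exp (-(1 / 2 : ℝ) * x ^ 2) / √(2 * π) := by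
    funext x; unfold stdPdf; ring_nf
  rw [h]
  exact (integrable_exp_neg_mul_sq (by norm_num)).div_const _

lemma stdCdf_eq_add_intervalIntegral (y : ℝ) :
    stdCdf y = stdCdf 0 + ∫ u in (0 : ℝ)..y, stdPdf u := by
  have hIic (z : ℝ) : stdCdf z = ∫ u in Set.Iic z, stdPdf u :=
    setIntegral_congr_set Iio_ae_eq_Iic
  rw [hIic, hIic, ← intervalIntegral.integral_Iic_sub_Iic integrable_stdPdf.integrableOn
    integrable_stdPdf.integrableOn]
  ring

lemma hasDerivAt_stdCdf (x : ℝ) : HasDerivAt stdCdf (stdPdf x) x := by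
  rw [funext stdCdf_eq_add_intervalIntegral]
  exact (intervalIntegral.integral_hasDerivAt_right integrable_stdPdf.intervalIntegrable
    continuous_stdPdf.aestronglyMeasurable.stronglyMeasurableAtFilter
    continuous_stdPdf.continuousAt).const_add _

lemma exp_mul_stdPdf_sub_div (a b : ℝ) {s : ℝ} (hs : s ≠ 0) :
    exp (-2 * b * a) * stdPdf (s * a - b / s) = stdPdf (s * a + b / s) := by
  unfold stdPdf
  rw [mul_div_assoc', ← exp_add]
  congr 2
  field_simp
  ring

lemma hasDerivAt_stdCdf_add_div_sub (a b : ℝ) {s : ℝ} (hs : s ≠ 0) :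
    HasDerivAt (fun s => stdCdf (s * a + b / s) - exp (-2 * b * a) * stdCdf (s * a - b / s))
      (-(2 * b) / s ^ 2 * stdPdf (s * a + b / s)) s := by
  have hplus : HasDerivAt (fun s : ℝ => s * a + b / s) (a - b / s ^ 2) s := by
    refine (((hasDerivAt_id s).mul_const a).add ((hasDerivAt_inv hs).const_mul b)).congr_deriv ?_
    field_simp
    ring
  have hminus : HasDerivAt (fun s : ℝ => s * a - b / s) (a + b / s ^ 2) s := by
    refine (((hasDerivAt_id s).mul_const a).sub ((hasDerivAt_inv hs).const_mul b)).congr_deriv ?_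
    field_simp
    ring
  refine (((hasDerivAt_stdCdf _).comp s hplus).sub
    (((hasDerivAt_stdCdf _).comp s hminus).const_mul (exp (-2 * b * a)))).congr_deriv ?_
  rw [← mul_assoc, exp_mul_stdPdf_sub_div a b hs]
  ring

lemma strictAntiOn_stdCdf_add_div_sub (a : ℝ) {b : ℝ} (hb : 0 < b) :
    StrictAntiOn (fun s => stdCdf (s * a + b / s) - exp (-2 * b * a) * stdCdf (s * a - b / s))
      (Set.Ioi 0) := by
  refine strictAntiOn_of_deriv_neg (convex_Ioi 0) (fun s hs => ?_) (fun s hs => ?_)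
  · exact (hasDerivAt_stdCdf_add_div_sub a b (ne_of_gt hs)).continuousAt.continuousWithinAt
  · rw [interior_Ioi] at hs
    rw [(hasDerivAt_stdCdf_add_div_sub a b (ne_of_gt hs)).deriv]
    have hs : (0 : ℝ) < s := hs
    exact mul_neg_of_neg_of_pos (div_neg_of_neg_of_pos (by linarith) (by positivity))
      (stdPdf_pos _)

lemma survF_eq (t τ q μ σ c : ℝ) :
    survF t τ q μ σ c =
      stdCdf (√(t * τ) * (q - c) + (μ - c) / σ ^ 2 / √(t * τ))
        - exp (-2 * ((μ - c) / σ ^ 2) * (q - c))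
          * stdCdf (√(t * τ) * (q - c) - (μ - c) / σ ^ 2 / √(t * τ)) := by
  rw [survF, div_div]
  congr 3
  ring

/-- for μ > c, the survival probability is strictly decreasing in t on (0, ∞). -/
theorem stmt_13 (μ σ c τ q : ℝ) (hσ : 0 < σ) (hτ : 0 < τ) (hμ : μ > c)
    (t t' : ℝ) (ht : 0 < t) (htt' : t < t') :
    survF t τ q μ σ c > survF t' τ q μ σ c := by
  have hb : 0 < (μ - c) / σ ^ 2 := div_pos (by linarith) (by positivity)
  have htτ : 0 < t * τ := mul_pos ht hτ
  have htτ' : t * τ < t' * τ := mul_lt_mul_of_pos_right htt' hτ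
  rw [gt_iff_lt, survF_eq, survF_eq]
  exact strictAntiOn_stdCdf_add_div_sub (q - c) hb (sqrt_pos.2 htτ)
    (sqrt_pos.2 (htτ.trans htτ')) (sqrt_lt_sqrt htτ.le htτ')
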